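/- The function ψ(z) = (φ(z)/Φ(z))·(z + φ(z)/Φ(z)) satisfies lim_{z→−∞} ψ(z) = 1. -/

import Mathlib

open MeasureTheory Filter Set

noncomputable def phi (z : ℝ) : ℝ := (Real.sqrt (2 * Real.pi))⁻¹ * Real.exp (-z ^ 2 / 2)
noncomputable def Phi (z : ℝ) : ℝ := ∫ t in Set.Iic z, phi t
noncomputable def psi (z : ℝ) : ℝ := (phi z / Phi z) * (z + phi z / Phi z)


lemma phi_pos (z : ℝ) : 0 < phi z := by
  unfold phi
  have : 0 < Real.sqrt (2 * Real.pi) := Real.sqrt_pos.mpr (by positivity)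
  positivity

lemma phi_neg (z : ℝ) : phi (-z) = phi z := by simp [phi, neg_pow]

lemma continuous_phi : Continuous phi := by unfold phi; fun_prop

lemma integrable_phi : Integrable phi := by
  have h : phi = fun z => (Real.sqrt (2*Real.pi))⁻¹ * Real.exp (-(1/2 : ℝ) * z^2) := by
    funext z; unfold phi; ring_nf
  rw [h]
  exact (integrable_exp_neg_mul_sq (by norm_num)).const_mul _

lemma hasDerivAt_phi (z : ℝ) : HasDerivAt phi (-z * phi z) z := by
  have h1 : HasDerivAt (fun z : ℝ => -z^2/2) (-z) z := by
    have := ((hasDerivAt_pow 2 z).div_const 2).neg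
    convert this using 1
    · rfl
    · rfl
    · funext x; simp only [Pi.neg_apply]; ring
    · norm_num
  have h2 := (h1.exp).const_mul (Real.sqrt (2 * Real.pi))⁻¹
  have : HasDerivAt phi ((Real.sqrt (2 * Real.pi))⁻¹ * (Real.exp (-z ^ 2 / 2) * -z)) z := h2
  convert this using 1
  unfold phi; ring

lemma tendsto_phi_atTop : Tendsto phi atTop (nhds 0) := by
  have h : Tendsto (fun t : ℝ => -t^2/2) atTop atBot := by
    apply Tendsto.atBot_div_const (by norm_num)
    exact tendsto_neg_atBot_iff.mpr (tendsto_pow_atTop two_ne_zero)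
  have := (Real.tendsto_exp_atBot.comp h).const_mul (Real.sqrt (2 * Real.pi))⁻¹
  rw [mul_zero] at this
  apply this.congr
  intro t
  simp only [Function.comp]
  unfold phi; ring



noncomputable def Q (u : ℝ) : ℝ := ∫ t in Ioi u, phi t

lemma intOn_div (u : ℝ) (hu : 0 < u) (n : ℕ) :
    IntegrableOn (fun t => phi t / t ^ n) (Ioi u) := by
  apply Integrable.mono' ((integrable_phi.const_mul (u ^ n)⁻¹).integrableOn)
  · exact ((continuous_phi.measurable.div (measurable_id.pow_const n)).aestronglyMeasurable)
  · filter_upwards [ae_restrict_mem measurableSet_Ioi] with t ht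
    have ht0 : 0 < t := lt_trans hu ht
    have hpn : 0 < t ^ n := pow_pos ht0 n
    rw [Real.norm_eq_abs, abs_of_nonneg (div_nonneg (phi_pos t).le (by positivity))]
    rw [div_le_iff₀ hpn, mul_comm (u ^ n)⁻¹, mul_assoc]
    apply le_mul_of_one_le_right (phi_pos t).le
    rw [← div_eq_inv_mul, le_div_iff₀ (pow_pos hu n)]
    simpa using pow_le_pow_left₀ hu.le ht.le n

lemma tendsto_phi_div_pow (n : ℕ) (hn : n ≠ 0) :
    Tendsto (fun t : ℝ => -phi t / t ^ n) atTop (nhds 0) := by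
  have h1 : Tendsto (fun t : ℝ => (t ^ n)⁻¹) atTop (nhds 0) :=
    tendsto_inv_atTop_zero.comp (tendsto_pow_atTop hn)
  have := (tendsto_phi_atTop.neg.mul h1)
  simpa [div_eq_mul_inv] using this

lemma key1 {u : ℝ} (hu : 0 < u) :
    ∫ t in Ioi u, (phi t + phi t / t ^ 2) = phi u / u := by
  have hderiv : ∀ x ∈ Ici u, HasDerivAt (fun t => -phi t / t) (phi x + phi x / x ^ 2) x := by
    intro x hx
    have hx0 : 0 < x := lt_of_lt_of_le hu hx
    have h := ((hasDerivAt_phi x).neg.div (hasDerivAt_id x) hx0.ne')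
    have e : (-(-x * phi x) * id x - -phi x * 1) / id x ^ 2 = phi x + phi x / x ^ 2 := by
      simp only [id]
      field_simp
      ring
    exact e ▸ h
  have hint : IntegrableOn (fun t => phi t + phi t / t ^ 2) (Ioi u) :=
    (integrable_phi.integrableOn).add (intOn_div u hu 2)
  have hlim : Tendsto (fun t : ℝ => -phi t / t) atTop (nhds 0) := by
    simpa using tendsto_phi_div_pow 1 one_ne_zero
  have h := integral_Ioi_of_hasDerivAt_of_tendsto' hderiv hint hlim
  rw [h]; ring

lemma key3 {u : ℝ} (hu : 0 < u) :
    ∫ t in Ioi u, (phi t / t ^ 2 + 3 * (phi t / t ^ 4)) = phi u / u ^ 3 := by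
  have hderiv : ∀ x ∈ Ici u, HasDerivAt (fun t => -phi t / t ^ 3)
      (phi x / x ^ 2 + 3 * (phi x / x ^ 4)) x := by
    intro x hx
    have hx0 : 0 < x := lt_of_lt_of_le hu hx
    have h := ((hasDerivAt_phi x).neg.div ((hasDerivAt_pow 3 x)) (by positivity))
    have e : (-(-x * phi x) * x ^ 3 - -phi x * (↑3 * x ^ (3-1))) / (x ^ 3) ^ 2
        = phi x / x ^ 2 + 3 * (phi x / x ^ 4) := by
      norm_num
      field_simp
    exact e ▸ h
  have hint : IntegrableOn (fun t => phi t / t ^ 2 + 3 * (phi t / t ^ 4)) (Ioi u) :=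
    (intOn_div u hu 2).add ((intOn_div u hu 4).const_mul 3)
  have h := integral_Ioi_of_hasDerivAt_of_tendsto' hderiv hint
    (tendsto_phi_div_pow 3 three_ne_zero)
  rw [h]; ring

lemma Q_bounds {u : ℝ} (hu : 0 < u) :
    phi u * (1/u - 1/u^3) ≤ Q u ∧ Q u ≤ phi u * (1/u - 1/u^3 + 3/u^5) := by
  have hi2 := intOn_div u hu 2
  have hi4 := intOn_div u hu 4
  have e1 : Q u + ∫ t in Ioi u, phi t / t ^ 2 = phi u / u := by
    rw [Q, ← integral_add (integrable_phi.integrableOn) hi2]; exact key1 hu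
  have e3 : (∫ t in Ioi u, phi t / t ^ 2) + 3 * ∫ t in Ioi u, phi t / t ^ 4 = phi u / u ^ 3 := by
    rw [← integral_const_mul, ← integral_add hi2 (hi4.const_mul 3)]; exact key3 hu
  have hI4nn : 0 ≤ ∫ t in Ioi u, phi t / t ^ 4 := by
    apply setIntegral_nonneg measurableSet_Ioi
    intro t ht
    have ht0 : 0 < t := lt_trans hu ht
    exact div_nonneg (phi_pos t).le (by positivity)
  have hI2nn : 0 ≤ ∫ t in Ioi u, phi t / t ^ 2 :=
    setIntegral_nonneg measurableSet_Ioi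
      (fun t ht => div_nonneg (phi_pos t).le (pow_nonneg (le_of_lt (lt_trans hu ht)) 2))
  have hQle : Q u ≤ phi u / u := by linarith
  have hI4le : (∫ t in Ioi u, phi t / t ^ 4) ≤ phi u / u ^ 5 := by
    have step : (∫ t in Ioi u, phi t / t ^ 4) ≤ ∫ t in Ioi u, phi t / u ^ 4 := by
      apply setIntegral_mono_on hi4 ((integrable_phi.div_const _).integrableOn) measurableSet_Ioi
      intro t ht
      have ht0 : 0 < t := lt_trans hu ht
      apply div_le_div_of_nonneg_left (phi_pos t).le (by positivity)
      exact pow_le_pow_left₀ hu.le (le_of_lt ht) 4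
    have : (∫ t in Ioi u, phi t / u ^ 4) = Q u / u ^ 4 := by
      rw [integral_div]; rfl
    rw [this] at step
    calc (∫ t in Ioi u, phi t / t ^ 4) ≤ Q u / u ^ 4 := step
      _ ≤ (phi u / u) / u ^ 4 := by
          apply div_le_div_of_nonneg_right hQle (by positivity)
      _ = phi u / u ^ 5 := by ring
  constructor
  · have : phi u / u - phi u / u ^ 3 ≤ Q u := by nlinarith
    calc phi u * (1/u - 1/u^3) = phi u / u - phi u / u ^ 3 := by ring
      _ ≤ Q u := this
  · have : Q u ≤ phi u / u - phi u / u ^ 3 + 3 * (phi u / u ^ 5) := by nlinarith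
    calc Q u ≤ phi u / u - phi u / u ^ 3 + 3 * (phi u / u ^ 5) := this
      _ = phi u * (1/u - 1/u^3 + 3/u^5) := by ring


lemma Phi_eq (z : ℝ) : Phi z = Q (-z) := by
  have : Phi z = ∫ t in Iic z, phi (-t) := by
    unfold Phi
    congr 1
    funext t
    rw [phi_neg]
  rw [this, integral_comp_neg_Iic]
  rfl

lemma cube_lemma {u : ℝ} (hu : 2 ≤ u) : (0:ℝ) < 1/u - 1/u^3 := by
  have hu0 : (0:ℝ) < u := by linarith
  rw [sub_pos, div_lt_div_iff₀ (by positivity) hu0]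
  nlinarith [mul_nonneg (sub_nonneg.mpr hu) (mul_pos hu0 hu0).le,
    mul_nonneg (sub_nonneg.mpr hu) hu0.le]

lemma sandwich (u r lo hi : ℝ) (hu0 : 0 < u) (hlo : 0 < lo) (h1 : lo ≤ r)
    (h2 : r ≤ hi) (hhi1 : u * hi ≤ 1) :
    (1 - u*hi)/hi^2 ≤ (1/r) * (1/r - u) ∧ (1/r) * (1/r - u) ≤ (1 - u*lo)/lo^2 := by
  have hr0 : 0 < r := lt_of_lt_of_le hlo h1
  have key : (1/r) * (1/r - u) = (1 - u*r)/r^2 := by field_simp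
  have hhipos : 0 < hi := lt_of_lt_of_le hr0 h2
  have hnn_r : 0 ≤ 1 - u*r := by nlinarith
  constructor
  · rw [key]
    exact div_le_div₀ hnn_r (by nlinarith) (by positivity) (by nlinarith)
  · rw [key]
    exact div_le_div₀ (by nlinarith) (by nlinarith) (by positivity) (by nlinarith)

lemma tendsto_one_div_pow (n : ℕ) (hn : n ≠ 0) (he : Even n) :
    Tendsto (fun z : ℝ => 1/z^n) atBot (nhds 0) := by
  have h : Tendsto (fun z : ℝ => z^n) atBot atTop := by
    have h2 := (tendsto_pow_atTop hn).comp (tendsto_neg_atBot_atTop (G := ℝ))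
    apply h2.congr
    intro z
    simp only [Function.comp_apply]
    exact he.neg_pow z
  simpa [one_div, Function.comp_def] using tendsto_inv_atTop_zero.comp h

lemma main_bounds {z : ℝ} (hz : z ≤ -2) :
    (1 - 3/z^2)/(1 - 1/z^2 + 3/z^4)^2 ≤ psi z ∧ psi z ≤ 1/(1 - 1/z^2)^2 := by
  set u := -z with hu
  have hzu : z = -u := by rw [hu]; ring
  have hu2 : 2 ≤ u := by rw [hu]; linarith
  have hu0 : 0 < u := by linarith
  have hphi : phi z = phi u := by rw [hzu, phi_neg]
  have hPhi : Phi z = Q u := by rw [Phi_eq, ← hu]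
  obtain ⟨hQlo, hQhi⟩ := Q_bounds hu0
  have hp : 0 < phi u := phi_pos u
  have hune : u ≠ 0 := hu0.ne'
  have hxlo : (0:ℝ) < 1/u - 1/u^3 := cube_lemma hu2
  have hQpos : 0 < Q u := lt_of_lt_of_le (by positivity) hQlo
  set r := Q u / phi u with hr
  have hrlo : 1/u - 1/u^3 ≤ r := by
    rw [hr, le_div_iff₀ hp, mul_comm]
    exact hQlo
  have hrhi : r ≤ 1/u - 1/u^3 + 3/u^5 := by
    rw [hr, div_le_iff₀ hp, mul_comm]
    exact hQhi
  have hiu2 : 3/u^4 ≤ 1/u^2 := by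
    rw [div_le_div_iff₀ (by positivity) (by positivity)]
    nlinarith [mul_nonneg (mul_nonneg (sub_nonneg.mpr hu2) (by linarith : (0:ℝ) ≤ u + 2))
      (sq_nonneg u), sq_nonneg u]
  have hiu4 : (1:ℝ)/u^2 ≤ 1/4 := by
    rw [div_le_div_iff₀ (by positivity) (by norm_num)]
    nlinarith
  have hmulhi : u * (1/u - 1/u^3 + 3/u^5) = 1 - 1/u^2 + 3/u^4 := by
    field_simp
  have hmullo : u * (1/u - 1/u^3) = 1 - 1/u^2 := by
    field_simp
  have hhi1 : u * (1/u - 1/u^3 + 3/u^5) ≤ 1 := by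
    rw [hmulhi]
    linarith [(by positivity : (0:ℝ) < 1/u^2)]
  obtain ⟨hA, hB⟩ := sandwich u r (1/u - 1/u^3) (1/u - 1/u^3 + 3/u^5) hu0 hxlo hrlo hrhi hhi1
  have hinv : phi z / Phi z = 1/r := by
    rw [hphi, hPhi, hr, one_div_div]
  have hpsi : psi z = (1/r) * (1/r - u) := by
    unfold psi
    rw [hinv, hzu]
    ring_nf
  have hz2 : z^2 = u^2 := by rw [hzu]; ring
  have hz4 : z^4 = u^4 := by rw [hzu]; ring
  have hbase : (0:ℝ) < 1 - 1/u^2 + 3/u^4 := by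
    have : (0:ℝ) < 3/u^4 := by positivity
    linarith
  have hbase2 : (0:ℝ) < 1 - 1/u^2 := by linarith
  have eL : (1 - u*(1/u - 1/u^3 + 3/u^5))/(1/u - 1/u^3 + 3/u^5)^2
      = (1 - 3/u^2)/(1 - 1/u^2 + 3/u^4)^2 := by
    have hhine : (0:ℝ) < 1/u - 1/u^3 + 3/u^5 := by
      have : (0:ℝ) < 3/u^5 := by positivity
      linarith
    rw [div_eq_div_iff (by positivity) (pow_ne_zero 2 hbase.ne')]
    field_simp
    ring
  have eU : (1 - u*(1/u - 1/u^3))/(1/u - 1/u^3)^2 = 1/(1 - 1/u^2)^2 := by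
    rw [div_eq_div_iff (by positivity) (pow_ne_zero 2 hbase2.ne')]
    field_simp
    ring
  rw [hpsi, hz2, hz4]
  constructor
  · rw [← eL]
    exact hA
  · rw [← eU]
    exact hB

theorem stmt3 : Filter.Tendsto psi Filter.atBot (nhds 1) := by
  have h2 := tendsto_one_div_pow 2 (by norm_num) (by norm_num)
  have h4 := tendsto_one_div_pow 4 (by norm_num) (by decide)
  have hL : Tendsto (fun z : ℝ => (1 - 3/z^2)/(1 - 1/z^2 + 3/z^4)^2) atBot (nhds 1) := by
    have hnum : Tendsto (fun z : ℝ => 1 - 3/z^2) atBot (nhds 1) := by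
      have := (h2.const_mul 3).const_sub 1
      simpa [mul_one_div, div_eq_mul_inv] using this
    have hden : Tendsto (fun z : ℝ => (1 - 1/z^2 + 3/z^4)^2) atBot (nhds 1) := by
      have h : Tendsto (fun z : ℝ => 1 - 1/z^2 + 3/z^4) atBot (nhds 1) := by
        have := (h2.const_sub 1).add (h4.const_mul 3)
        simpa [mul_one_div, div_eq_mul_inv] using this
      simpa using h.pow 2
    simpa [Pi.div_def] using hnum.div hden one_ne_zero
  have hU : Tendsto (fun z : ℝ => 1/(1 - 1/z^2)^2) atBot (nhds 1) := by
    have hden : Tendsto (fun z : ℝ => (1 - 1/z^2)^2) atBot (nhds 1) := by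
      simpa using (h2.const_sub 1).pow 2
    have := hden.inv₀ one_ne_zero
    simpa [one_div] using this
  apply tendsto_of_tendsto_of_tendsto_of_le_of_le' hL hU
  · filter_upwards [eventually_le_atBot (-2 : ℝ)] with z hz
    exact (main_bounds hz).1
  · filter_upwards [eventually_le_atBot (-2 : ℝ)] with z hz
    exact (main_bounds hz).2
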